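/- arXiv:math/0305387 — 2 statements merged into one kernel-verified Lean document; each statement's English description precedes it below -/
import Mathlib

section
/- For all real a, b > 0, ∫₀¹ (a·b)/(a·(1−t) + b·t) · 1/(π·√(t·(1−t))) dt = √(a·b). -/
open MeasureTheory Real Set

/-! The function `G t = (2√(ab)/π) · arcsin √(bt / (a(1-t) + bt))` is continuous on `[0, 1]`,
rises from `0` to `√(ab)`, and differentiates to the integrand on `(0, 1)`. Since the integrand
is nonnegative, its integrability comes for free, and the fundamental theorem of calculus
gives the identity. -/

theorem integral_Ioo_eq_sub_of_hasDerivAt_of_nonneg {f f' : ℝ → ℝ} {a b : ℝ} (hab : a ≤ b)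
    (hcont : ContinuousOn f (Icc a b)) (hderiv : ∀ x ∈ Ioo a b, HasDerivAt f (f' x) x)
    (hnonneg : ∀ x ∈ Ioo a b, 0 ≤ f' x) :
    ∫ x in Ioo a b, f' x = f b - f a := by
  rw [← integral_Ioc_eq_integral_Ioo, ← intervalIntegral.integral_of_le hab]
  exact intervalIntegral.integral_eq_sub_of_hasDerivAt_of_le hab hcont hderiv
    ((intervalIntegrable_iff_integrableOn_Ioc_of_le hab).2
      (intervalIntegral.integrableOn_deriv_of_nonneg hcont hderiv hnonneg))

theorem Real.hasDerivAt_arcsin_sqrt {x : ℝ} (h0 : 0 < x) (h1 : x < 1) :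
    HasDerivAt (fun y => arcsin √y) (1 / (2 * √(x * (1 - x)))) x := by
  have hsqrt_lt : √x < 1 := by rwa [sqrt_lt' one_pos, one_pow]
  refine ((hasDerivAt_arcsin (by linarith [sqrt_nonneg x]) hsqrt_lt.ne).comp x
    (hasDerivAt_sqrt h0.ne')).congr_deriv ?_
  rw [sq_sqrt h0.le, sqrt_mul h0.le]
  field_simp

theorem mul_one_sub_add_mul_pos {a b t : ℝ} (ha : 0 < a) (hb : 0 < b) (ht : t ∈ Icc (0 : ℝ) 1) :
    0 < a * (1 - t) + b * t := by
  obtain ⟨ht0, ht1⟩ := ht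
  rcases le_total a b with hab | hab <;> nlinarith

noncomputable def geometricMeanPrimitive (a b t : ℝ) : ℝ :=
  2 * √(a * b) / π * arcsin √(b * t / (a * (1 - t) + b * t))

theorem continuousOn_geometricMeanPrimitive {a b : ℝ} (ha : 0 < a) (hb : 0 < b) :
    ContinuousOn (geometricMeanPrimitive a b) (Icc 0 1) := by
  unfold geometricMeanPrimitive
  refine continuousOn_const.mul (continuous_arcsin.comp_continuousOn
    (continuous_sqrt.comp_continuousOn (ContinuousOn.div (by fun_prop) (by fun_prop) ?_)))
  exact fun t ht => (mul_one_sub_add_mul_pos ha hb ht).ne'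

theorem hasDerivAt_geometricMeanPrimitive {a b t : ℝ} (ha : 0 < a) (hb : 0 < b)
    (ht : t ∈ Ioo (0 : ℝ) 1) :
    HasDerivAt (geometricMeanPrimitive a b)
      ((a * b / (a * (1 - t) + b * t)) * (1 / (π * √(t * (1 - t))))) t := by
  obtain ⟨ht0, ht1⟩ := ht
  set D := a * (1 - t) + b * t with hD_def
  have hD : 0 < D := mul_one_sub_add_mul_pos ha hb ⟨ht0.le, ht1.le⟩
  have hv : HasDerivAt (fun s => b * s / (a * (1 - s) + b * s)) (a * b / D ^ 2) t := by
    refine (((hasDerivAt_id t).const_mul b).div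
      ((((hasDerivAt_id t).const_sub 1).const_mul a).add ((hasDerivAt_id t).const_mul b))
      hD.ne').congr_deriv ?_
    simp only [id, Pi.add_apply, ← hD_def]
    field_simp
    ring
  have hv0 : 0 < b * t / D := by positivity
  have hv1 : b * t / D < 1 := by rw [div_lt_one hD]; nlinarith [mul_pos ha (sub_pos.2 ht1)]
  have hsqrt : √(b * t / D * (1 - b * t / D)) = √(a * b) * √(t * (1 - t)) / D := by
    have hsq : b * t / D * (1 - b * t / D) = (√(a * b) * √(t * (1 - t)) / D) ^ 2 := by
      rw [div_pow, mul_pow, sq_sqrt (by positivity), sq_sqrt (by nlinarith)]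
      field_simp
      ring
    rw [hsq, sqrt_sq (by positivity)]
  have hG := ((hasDerivAt_arcsin_sqrt hv0 hv1).comp t hv).const_mul (2 * √(a * b) / π)
  refine hG.congr_deriv ?_
  rw [hsqrt]
  have : 0 < √(t * (1 - t)) := sqrt_pos.2 (mul_pos ht0 (sub_pos.2 ht1))
  have : 0 < √(a * b) := sqrt_pos.2 (mul_pos ha hb)
  field_simp

/-- Scalar Pusz–Woronowicz identity: for `a, b > 0`,
`∫₀¹ ab/(a(1−t)+bt) dμ(t) = √(ab)` with `dμ(t) = dt/(π√(t(1−t)))`. -/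
theorem puszWoronowicz_geometric_mean (a b : ℝ) (ha : 0 < a) (hb : 0 < b) :
    ∫ t in Set.Ioo (0 : ℝ) 1,
      (a * b / (a * (1 - t) + b * t)) * (1 / (Real.pi * Real.sqrt (t * (1 - t))))
      = Real.sqrt (a * b) := by
  rw [integral_Ioo_eq_sub_of_hasDerivAt_of_nonneg zero_le_one
    (continuousOn_geometricMeanPrimitive ha hb)
    (fun t ht => hasDerivAt_geometricMeanPrimitive ha hb ht)
    (fun t ⟨ht0, ht1⟩ => by have := mul_one_sub_add_mul_pos ha hb ⟨ht0.le, ht1.le⟩; positivity)]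
  simp only [geometricMeanPrimitive, sub_self, sub_zero, mul_zero, mul_one, zero_add, add_zero,
    zero_div, div_self hb.ne', sqrt_zero, sqrt_one, arcsin_zero, arcsin_one]
  field_simp
end

section
/- For every real δ with 0 < δ < 1/2, ∫_{δ}^{1/2} ∫_{1/2}^{1−δ} ( t·(1−s)/(t·s + (1−t)·(1−s)) )² · (1/t) · (1/(1−s)) dμ(t) dμ(s) ≤ 16/(3·π²), where dμ(t) = dt/(π·√(t·(1−t))). -/
open MeasureTheory

/-!
By AM–GM, `(ts + (1-t)(1-s))² ≥ 4ts(1-t)(1-s)`, so `h(t,s)² / (t(1-s)) ≤ 1 / (4s(1-t))` and the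
integrand is dominated by the product `w(1-s) w(t) / 4`, where `w(t) = ρ(t) / (1-t)` and `ρ` is the
arcsine density. The reflection `s ↦ 1 - s` maps `[1/2, 1-δ]` onto `[δ, 1/2]`, and `w` has the
primitive `(2/π) √(t/(1-t))`, so `∫_δ^{1/2} w ≤ 2/π`. Hence the double integral is at most
`1/π² ≤ 16/(3π²)`.
-/

open Real Set

theorem norm_integral_integral_le_mul {α β E : Type*} [MeasurableSpace α] [MeasurableSpace β]
    [NormedAddCommGroup E] [NormedSpace ℝ E] {μ : Measure α} {ν : Measure β}
    {f : α → β → E} {k : α → ℝ} {g : β → ℝ} (hk : Integrable k μ) (hg : Integrable g ν)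
    (hf : ∀ᵐ x ∂μ, ∀ᵐ y ∂ν, ‖f x y‖ ≤ k x * g y) :
    ‖∫ x, ∫ y, f x y ∂ν ∂μ‖ ≤ (∫ x, k x ∂μ) * ∫ y, g y ∂ν := by
  have inner : ∀ᵐ x ∂μ, ‖∫ y, f x y ∂ν‖ ≤ k x * ∫ y, g y ∂ν := by
    filter_upwards [hf] with x hx
    rw [← integral_const_mul]
    exact norm_integral_le_of_norm_le (hg.const_mul _) hx
  rw [← integral_mul_const]
  exact norm_integral_le_of_norm_le (hk.mul_const _) inner

theorem integrableOn_Icc_comp_one_sub {E : Type*} [NormedAddCommGroup E] {f : ℝ → E} {a b : ℝ} :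
    IntegrableOn (fun s => f (1 - s)) (Icc (1 - b) (1 - a)) ↔ IntegrableOn f (Icc a b) := by
  have := (volume.measurePreserving_sub_left (1 : ℝ)).integrableOn_comp_preimage
    (measurableEmbedding_subLeft 1) (f := f) (s := Icc a b)
  rwa [preimage_const_sub_Icc] at this

theorem setIntegral_Icc_comp_one_sub {E : Type*} [NormedAddCommGroup E] [NormedSpace ℝ E]
    (f : ℝ → E) (a b : ℝ) :
    ∫ s in Icc (1 - b) (1 - a), f (1 - s) = ∫ t in Icc a b, f t := by
  have := (volume.measurePreserving_sub_left (1 : ℝ)).setIntegral_preimage_emb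
    (measurableEmbedding_subLeft 1) f (Icc a b)
  rwa [preimage_const_sub_Icc] at this

noncomputable def arcsineDensity (t : ℝ) : ℝ := 1 / (π * √(t * (1 - t)))

theorem arcsineDensity_nonneg (t : ℝ) : 0 ≤ arcsineDensity t := by
  unfold arcsineDensity
  have := pi_pos
  positivity

theorem arcsineDensity_one_sub (t : ℝ) : arcsineDensity (1 - t) = arcsineDensity t := by
  simp only [arcsineDensity, sub_sub_cancel, mul_comm]

theorem hasDerivAt_sqrt_div_one_sub {t : ℝ} (h0 : 0 < t) (h1 : t < 1) :
    HasDerivAt (fun x => 2 / π * √(x / (1 - x))) (arcsineDensity t / (1 - t)) t := by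
  have h1' : 0 < 1 - t := by linarith
  have hquot : HasDerivAt (fun x => x / (1 - x)) ((1 * (1 - t) - t * -1) / (1 - t) ^ 2) t :=
    (hasDerivAt_id' t).div ((hasDerivAt_id' t).const_sub 1) h1'.ne'
  refine ((hquot.sqrt (div_pos h0 h1').ne').const_mul (2 / π)).congr_deriv ?_
  have := pi_pos
  have : 0 < √t := sqrt_pos.2 h0
  have : 0 < √(1 - t) := sqrt_pos.2 h1'
  rw [arcsineDensity, sqrt_mul h0.le, sqrt_div h0.le]
  field_simp
  rw [sq_sqrt h1'.le]
  ring

theorem continuousOn_sqrt_div_one_sub {a b : ℝ} (ha : 0 < a) (hb : b < 1) :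
    ContinuousOn (fun x => 2 / π * √(x / (1 - x))) (Icc a b) := fun _ hx =>
  (hasDerivAt_sqrt_div_one_sub (ha.trans_le hx.1) (hx.2.trans_lt hb)).continuousAt
    |>.continuousWithinAt

theorem integrableOn_arcsineDensity_div_one_sub {a b : ℝ} (ha : 0 < a) (hb : b < 1) :
    IntegrableOn (fun t => arcsineDensity t / (1 - t)) (Icc a b) := by
  rw [integrableOn_Icc_iff_integrableOn_Ioc]
  refine intervalIntegral.integrableOn_deriv_of_nonneg (continuousOn_sqrt_div_one_sub ha hb)
    (fun x hx => hasDerivAt_sqrt_div_one_sub (ha.trans hx.1) (hx.2.trans hb)) fun x hx => ?_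
  have : 0 < 1 - x := by linarith [hx.2]
  exact div_nonneg (arcsineDensity_nonneg x) this.le

theorem integral_arcsineDensity_div_one_sub {a b : ℝ} (ha : 0 < a) (hab : a ≤ b) (hb : b < 1) :
    ∫ t in Icc a b, arcsineDensity t / (1 - t)
      = 2 / π * √(b / (1 - b)) - 2 / π * √(a / (1 - a)) := by
  rw [integral_Icc_eq_integral_Ioc, ← intervalIntegral.integral_of_le hab]
  exact intervalIntegral.integral_eq_sub_of_hasDerivAt_of_le hab
    (continuousOn_sqrt_div_one_sub ha hb)
    (fun x hx => hasDerivAt_sqrt_div_one_sub (ha.trans hx.1) (hx.2.trans hb))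
    ((intervalIntegrable_iff_integrableOn_Icc_of_le hab).2
      (integrableOn_arcsineDensity_div_one_sub ha hb))

noncomputable def hFun (t s : ℝ) : ℝ := t * (1 - s) / (t * s + (1 - t) * (1 - s))

theorem hFun_sq_mul_le {t s : ℝ} (ht : 0 < t) (ht' : t < 1) (hs : 0 < s) (hs' : s < 1) :
    hFun t s ^ 2 * (1 / t) * (1 / (1 - s)) ≤ 1 / (4 * (s * (1 - t))) := by
  have : 0 < 1 - t := by linarith
  have : 0 < 1 - s := by linarith
  calc hFun t s ^ 2 * (1 / t) * (1 / (1 - s))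
      = t * (1 - s) / (t * s + (1 - t) * (1 - s)) ^ 2 := by rw [hFun]; field_simp
    _ ≤ t * (1 - s) / (4 * (t * s) * ((1 - t) * (1 - s))) := by
      gcongr
      exact four_mul_le_sq_add _ _
    _ = 1 / (4 * (s * (1 - t))) := by field_simp

theorem abs_hFun_sq_mul_arcsineDensity_le {t s : ℝ} (ht : 0 < t) (ht' : t < 1) (hs : 0 < s)
    (hs' : s < 1) :
    |hFun t s ^ 2 * (1 / t) * (1 / (1 - s)) * arcsineDensity t * arcsineDensity s|
      ≤ arcsineDensity (1 - s) / (1 - (1 - s)) / 4 * (arcsineDensity t / (1 - t)) := by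
  have : 0 < 1 - s := by linarith
  have : 0 < 1 - t := by linarith
  have hρt := arcsineDensity_nonneg t
  have hρs := arcsineDensity_nonneg s
  rw [abs_of_nonneg (by unfold hFun; positivity), arcsineDensity_one_sub, sub_sub_cancel]
  calc _ ≤ 1 / (4 * (s * (1 - t))) * arcsineDensity t * arcsineDensity s := by
        gcongr
        exact hFun_sq_mul_le ht ht' hs hs'
    _ = _ := by field_simp

/-- For `0 < δ < 1/2`,
`∫_{δ}^{1/2} ∫_{1/2}^{1−δ} (t(1−s)/(ts+(1−t)(1−s)))² · t⁻¹ (1−s)⁻¹ dμ(t) dμ(s)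
  ≤ 16/(3π²)`, where `dμ(t) = dt/(π√(t(1−t)))`. -/
theorem h_function_L2_bound (δ : ℝ) (hδ : 0 < δ) (hδ' : δ < 1 / 2) :
    ∫ s in Set.Icc (1 / 2 : ℝ) (1 - δ), ∫ t in Set.Icc δ (1 / 2 : ℝ),
        (t * (1 - s) / (t * s + (1 - t) * (1 - s))) ^ 2 * (1 / t) * (1 / (1 - s))
          * (1 / (Real.pi * Real.sqrt (t * (1 - t))))
          * (1 / (Real.pi * Real.sqrt (s * (1 - s))))
      ≤ 16 / (3 * Real.pi ^ 2) := by
  have hpi := pi_pos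
  have hw_int : IntegrableOn (fun t => arcsineDensity t / (1 - t)) (Icc δ (1 / 2)) :=
    integrableOn_arcsineDensity_div_one_sub hδ (by norm_num)
  have hw_le : ∫ t in Icc δ (1 / 2), arcsineDensity t / (1 - t) ≤ 2 / π := by
    rw [integral_arcsineDensity_div_one_sub hδ hδ'.le (by norm_num)]
    norm_num
    positivity
  have hw_nonneg : 0 ≤ ∫ t in Icc δ (1 / 2), arcsineDensity t / (1 - t) :=
    setIntegral_nonneg measurableSet_Icc fun t ht =>
      div_nonneg (arcsineDensity_nonneg t) (by linarith [ht.2])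
  have hreflect : Icc (1 / 2 : ℝ) (1 - δ) = Icc (1 - 1 / 2) (1 - δ) := by norm_num
  calc _ ≤ (∫ s in Icc (1 / 2) (1 - δ), arcsineDensity (1 - s) / (1 - (1 - s)) / 4)
          * ∫ t in Icc δ (1 / 2), arcsineDensity t / (1 - t) := by
        refine (Real.le_norm_self _).trans (norm_integral_integral_le_mul ?_ hw_int ?_)
        · rw [hreflect]
          exact (integrableOn_Icc_comp_one_sub.2 hw_int).div_const 4
        · refine ae_restrict_of_forall_mem measurableSet_Icc fun s hs =>
            ae_restrict_of_forall_mem measurableSet_Icc fun t ht => ?_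
          exact abs_hFun_sq_mul_arcsineDensity_le (hδ.trans_le ht.1) (by linarith [ht.2])
            (by linarith [hs.1]) (by linarith [hs.2])
    _ = (∫ t in Icc δ (1 / 2), arcsineDensity t / (1 - t)) ^ 2 / 4 := by
        rw [integral_div, hreflect,
          setIntegral_Icc_comp_one_sub (fun t => arcsineDensity t / (1 - t))]
        ring
    _ ≤ (2 / π) ^ 2 / 4 := by gcongr
    _ ≤ 16 / (3 * π ^ 2) := by
        field_simp
        norm_num
end
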